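/- Let α > 0, ρ > 0, η, κ, β ∈ ℝ, p ≥ 1, and 0 ≤ a < x. Let f, g be two positive functions on [a,x] such that I f^p(x) < ∞ and I g^p(x) < ∞, where I denotes the generalized fractional integral ρI^{α,β}_{a+,η,κ}. If there exist real constants 0 < m ≤ M such that m ≤ f(t)/g(t) ≤ M for all t ∈ [a,x], then (I f^p(x))^(2/p) + (I g^p(x))^(2/p) ≥ c₂ · (I f^p(x))^(1/p) · (I g^p(x))^(1/p), where c₂ = (M+1)(m+1)/M − 2. -/

import Mathlib

open MeasureTheory

/-- The left-sided generalized (Katugampola) fractional integral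
`ρI^{α,β}_{a+,η,κ} f (x)`. -/
noncomputable def katI (α ρ η κ β a x : ℝ) (f : ℝ → ℝ) : ℝ :=
  (ρ ^ (1 - β) * x ^ κ / Real.Gamma α) *
    ∫ t in a..x, t ^ (ρ * (η + 1) - 1) * (x ^ ρ - t ^ ρ) ^ (α - 1) * f t

/-- Finiteness of the generalized fractional integral, expressed as integrability of the
kernel-weighted integrand. -/
def katIntegrable (α ρ η κ β a x : ℝ) (f : ℝ → ℝ) : Prop :=
  IntervalIntegrable
    (fun t => t ^ (ρ * (η + 1) - 1) * (x ^ ρ - t ^ ρ) ^ (α - 1) * f t)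
    volume a x

/-
The ratio bounds `m ≤ f / g ≤ M` survive raising to the power `p` and, the fractional integral
being a positive linear functional, give `m ^ p I g^p ≤ I f^p ≤ M ^ p I g^p`. Taking `p`-th roots,
`u = (I f^p)^(1/p)` and `v = (I g^p)^(1/p)` satisfy `m v ≤ u ≤ M v`, and then
`M (u² + v²) ≥ M m u v + u v ≥ (M m + m + 1 - M) u v`.
-/

theorem companion_const_mul_le_sq_add_sq {m M u v : ℝ} (hm : 0 < m) (hmM : m ≤ M)
    (hv : 0 ≤ v) (hmu : m * v ≤ u) (huM : u ≤ M * v) :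
    ((M + 1) * (m + 1) / M - 2) * (u * v) ≤ u ^ 2 + v ^ 2 := by
  have hM : 0 < M := hm.trans_le hmM
  have hu : 0 ≤ u := (mul_nonneg hm.le hv).trans hmu
  have hconst : (M + 1) * (m + 1) / M - 2 = (M * m + m + 1 - M) / M := by
    field_simp
    ring
  rw [hconst, div_mul_eq_mul_div, div_le_iff₀ hM]
  nlinarith [mul_nonneg (mul_nonneg hM.le hu) (sub_nonneg.2 hmu),
    mul_nonneg hv (sub_nonneg.2 huM), mul_nonneg (sub_nonneg.2 hmM) (mul_nonneg hu hv)]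

theorem rpow_mul_le_rpow_of_le_div {m u v p : ℝ} (hm : 0 ≤ m) (hv : 0 < v) (hp : 0 ≤ p)
    (h : m ≤ u / v) : m ^ p * v ^ p ≤ u ^ p := by
  rw [← Real.mul_rpow hm hv.le]
  exact Real.rpow_le_rpow (mul_nonneg hm hv.le) ((le_div_iff₀ hv).1 h) hp

theorem rpow_le_rpow_mul_of_div_le {M u v p : ℝ} (hv : 0 < v) (hp : 0 ≤ p)
    (hu : 0 ≤ u) (h : u / v ≤ M) : u ^ p ≤ M ^ p * v ^ p := by
  have huM : u ≤ M * v := (div_le_iff₀ hv).1 h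
  rw [← Real.mul_rpow ((div_nonneg hu hv.le).trans h) hv.le]
  exact Real.rpow_le_rpow hu huM hp

theorem rpow_mul_rpow_one_div {c v p : ℝ} (hc : 0 ≤ c) (hv : 0 ≤ v) (hp : p ≠ 0) :
    (c ^ p * v) ^ (1 / p) = c * v ^ (1 / p) := by
  rw [Real.mul_rpow (Real.rpow_nonneg hc p) hv, one_div, Real.rpow_rpow_inv hc hp]

theorem rpow_two_div_eq_sq {u p : ℝ} (hu : 0 ≤ u) : u ^ (2 / p) = (u ^ (1 / p)) ^ 2 := by
  rw [← Real.rpow_two, ← Real.rpow_mul hu]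
  ring_nf

section Katugampola

variable {α ρ η κ β a x : ℝ}

theorem katI_const_mul (c : ℝ) (f : ℝ → ℝ) :
    katI α ρ η κ β a x (fun t => c * f t) = c * katI α ρ η κ β a x f := by
  simp only [katI, mul_left_comm _ c, intervalIntegral.integral_const_mul]

theorem katIntegrable.const_mul {f : ℝ → ℝ} (hf : katIntegrable α ρ η κ β a x f) (c : ℝ) :
    katIntegrable α ρ η κ β a x (fun t => c * f t) := by
  simpa only [katIntegrable, mul_left_comm _ c] using IntervalIntegrable.const_mul hf c

theorem katConst_nonneg (hα : 0 < α) (hρ : 0 ≤ ρ) (hx : 0 ≤ x) :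
    0 ≤ ρ ^ (1 - β) * x ^ κ / Real.Gamma α := by
  have := Real.Gamma_pos_of_pos hα
  positivity

theorem katKernel_nonneg (hρ : 0 ≤ ρ) (ha : 0 ≤ a) {t : ℝ} (ht : t ∈ Set.Icc a x) :
    0 ≤ t ^ (ρ * (η + 1) - 1) * (x ^ ρ - t ^ ρ) ^ (α - 1) := by
  have ht0 : 0 ≤ t := ha.trans ht.1
  have htx : t ^ ρ ≤ x ^ ρ := Real.rpow_le_rpow ht0 ht.2 hρ
  exact mul_nonneg (Real.rpow_nonneg ht0 _) (Real.rpow_nonneg (sub_nonneg.2 htx) _)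

theorem katI_nonneg (hα : 0 < α) (hρ : 0 ≤ ρ) (ha : 0 ≤ a) (hax : a ≤ x) {f : ℝ → ℝ}
    (hf : ∀ t ∈ Set.Icc a x, 0 ≤ f t) : 0 ≤ katI α ρ η κ β a x f :=
  mul_nonneg (katConst_nonneg hα hρ (ha.trans hax)) <|
    intervalIntegral.integral_nonneg hax fun t ht =>
      mul_nonneg (katKernel_nonneg hρ ha ht) (hf t ht)

theorem katI_mono (hα : 0 < α) (hρ : 0 ≤ ρ) (ha : 0 ≤ a) (hax : a ≤ x) {f g : ℝ → ℝ}
    (hf : katIntegrable α ρ η κ β a x f) (hg : katIntegrable α ρ η κ β a x g)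
    (hfg : ∀ t ∈ Set.Icc a x, f t ≤ g t) :
    katI α ρ η κ β a x f ≤ katI α ρ η κ β a x g :=
  mul_le_mul_of_nonneg_left
    (intervalIntegral.integral_mono_on hax hf hg fun t ht =>
      mul_le_mul_of_nonneg_left (hfg t ht) (katKernel_nonneg hρ ha ht))
    (katConst_nonneg hα hρ (ha.trans hax))

end Katugampola

theorem reverse_minkowski_companion_katugampola_general
    (α ρ η κ β p m M a x : ℝ) (hα : 0 < α) (hρ : 0 < ρ) (hp : 1 ≤ p)
    (ha : 0 ≤ a) (hax : a < x)
    (f g : ℝ → ℝ)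
    (hg_pos : ∀ t ∈ Set.Icc a x, 0 < g t)
    (hf_int : katIntegrable α ρ η κ β a x (fun t => f t ^ p))
    (hg_int : katIntegrable α ρ η κ β a x (fun t => g t ^ p))
    (hm : 0 < m) (hmM : m ≤ M)
    (hbound : ∀ t ∈ Set.Icc a x, m ≤ f t / g t ∧ f t / g t ≤ M) :
    ((M + 1) * (m + 1) / M - 2) *
        ((katI α ρ η κ β a x (fun t => f t ^ p)) ^ (1 / p) *
          (katI α ρ η κ β a x (fun t => g t ^ p)) ^ (1 / p)) ≤
      (katI α ρ η κ β a x (fun t => f t ^ p)) ^ (2 / p) +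
        (katI α ρ η κ β a x (fun t => g t ^ p)) ^ (2 / p) := by
  have hp0 : 0 < p := one_pos.trans_le hp
  have hM : 0 < M := hm.trans_le hmM
  have hf_lower : ∀ t ∈ Set.Icc a x, m * g t ≤ f t := fun t ht =>
    (le_div_iff₀ (hg_pos t ht)).1 (hbound t ht).1
  set F := katI α ρ η κ β a x (fun t => f t ^ p)
  set G := katI α ρ η κ β a x (fun t => g t ^ p)
  have hG : 0 ≤ G := katI_nonneg hα hρ.le ha hax.le fun t ht => Real.rpow_nonneg (hg_pos t ht).le p
  have hmG : m ^ p * G ≤ F := by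
    rw [← katI_const_mul]
    exact katI_mono hα hρ.le ha hax.le (hg_int.const_mul _) hf_int fun t ht =>
      rpow_mul_le_rpow_of_le_div hm.le (hg_pos t ht) hp0.le (hbound t ht).1
  have hFM : F ≤ M ^ p * G := by
    rw [← katI_const_mul]
    exact katI_mono hα hρ.le ha hax.le hf_int (hg_int.const_mul _) fun t ht =>
      rpow_le_rpow_mul_of_div_le (hg_pos t ht) hp0.le
        ((mul_nonneg hm.le (hg_pos t ht).le).trans (hf_lower t ht)) (hbound t ht).2
  have hF : 0 ≤ F := (mul_nonneg (Real.rpow_nonneg hm.le p) hG).trans hmG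
  rw [rpow_two_div_eq_sq hF, rpow_two_div_eq_sq hG]
  refine companion_const_mul_le_sq_add_sq hm hmM (Real.rpow_nonneg hG _) ?_ ?_
  · rw [← rpow_mul_rpow_one_div hm.le hG hp0.ne']
    exact Real.rpow_le_rpow (mul_nonneg (Real.rpow_nonneg hm.le p) hG) hmG (by positivity)
  · rw [← rpow_mul_rpow_one_div hM.le hG hp0.ne']
    exact Real.rpow_le_rpow hF hFM (by positivity)

/-- Companion inequality via the generalized fractional integral. -/
theorem reverse_minkowski_companion_katugampola
    (α ρ η κ β p m M a x : ℝ) (hα : 0 < α) (hρ : 0 < ρ) (hp : 1 ≤ p)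
    (ha : 0 ≤ a) (hax : a < x)
    (f g : ℝ → ℝ)
    (hf_pos : ∀ t ∈ Set.Icc a x, 0 < f t)
    (hg_pos : ∀ t ∈ Set.Icc a x, 0 < g t)
    (hf_int : katIntegrable α ρ η κ β a x (fun t => f t ^ p))
    (hg_int : katIntegrable α ρ η κ β a x (fun t => g t ^ p))
    (hm : 0 < m) (hmM : m ≤ M)
    (hbound : ∀ t ∈ Set.Icc a x, m ≤ f t / g t ∧ f t / g t ≤ M) :
    ((M + 1) * (m + 1) / M - 2) *
        ((katI α ρ η κ β a x (fun t => f t ^ p)) ^ (1 / p) *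
          (katI α ρ η κ β a x (fun t => g t ^ p)) ^ (1 / p)) ≤
      (katI α ρ η κ β a x (fun t => f t ^ p)) ^ (2 / p) +
        (katI α ρ η κ β a x (fun t => g t ^ p)) ^ (2 / p) :=
  reverse_minkowski_companion_katugampola_general α ρ η κ β p m M a x hα hρ hp ha hax f g hg_pos
    hf_int hg_int hm hmM hbound
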